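/- arXiv:1602.01650 — 6 statements merged into one kernel-verified Lean document; each statement's English description precedes it below -/
import Mathlib

section
/- Let n > 0 and let 0 < y̲ < ȳ < 1. Then the Beta-Binomial distribution with prior mean parameter ȳ first-order stochastically dominates the one with prior mean parameter y̲; that is, for every l ∈ {0,…,m}, Σ_{j=0}^{l} p(j | ȳ, n, m, s, N) ≤ Σ_{j=0}^{l} p(j | y̲, n, m, s, N). -/
/-!
The Beta-Binomial law depends on `y` only through `α = n y + s` and `β = n (1 - y) + N - s`, and
`p(l + 1) / p(l) = C(m, l + 1) / C(m, l) · (l + α) / (m - l - 1 + β)`, which increases with `α` and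
decreases with `β`. Raising `y` raises `α` and lowers `β`, so the likelihood ratio
`p(· ∣ ȳ) / p(· ∣ y̲)` is increasing; for two laws of equal total mass this forces the cumulative
sums of the first below those of the second.
-/

/-- The Euler Beta function `B(a,b) = Γ(a)Γ(b)/Γ(a+b)`. -/
noncomputable def eulerBeta (a b : ℝ) : ℝ := Real.Gamma a * Real.Gamma b / Real.Gamma (a + b)

/-- The Beta-Binomial probability mass function
`p(l ∣ y, n, m, s, N) = C(m,l) · B(l + ny + s, m − l + n(1−y) + N − s) / B(ny + s, n(1−y) + N − s)`. -/
noncomputable def bbPmf (y n : ℝ) (m s N : ℕ) (l : ℕ) : ℝ :=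
  (m.choose l : ℝ) *
    eulerBeta ((l : ℝ) + n * y + s) ((m : ℝ) - l + n * (1 - y) + N - s) /
    eulerBeta (n * y + s) (n * (1 - y) + N - s)

open Finset

section EulerBeta

variable {a b : ℝ}

lemma eulerBeta_pos (ha : 0 < a) (hb : 0 < b) : 0 < eulerBeta a b := by
  unfold eulerBeta
  positivity

lemma eulerBeta_add_one_left (ha : 0 < a) (hb : 0 < b) :
    eulerBeta (a + 1) b = a / b * eulerBeta a (b + 1) := by
  unfold eulerBeta
  rw [add_right_comm, ← add_assoc, Real.Gamma_add_one ha.ne', Real.Gamma_add_one hb.ne']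
  field_simp

lemma eulerBeta_eq_add (ha : 0 < a) (hb : 0 < b) :
    eulerBeta a b = eulerBeta (a + 1) b + eulerBeta a (b + 1) := by
  have hab : 0 < a + b := add_pos ha hb
  unfold eulerBeta
  rw [add_right_comm, ← add_assoc, Real.Gamma_add_one ha.ne', Real.Gamma_add_one hb.ne',
    Real.Gamma_add_one hab.ne']
  have := (Real.Gamma_pos_of_pos hab).ne'
  field_simp

lemma sum_choose_mul_eulerBeta (m : ℕ) (ha : 0 < a) (hb : 0 < b) :
    ∑ l ∈ range (m + 1), (m.choose l : ℝ) * eulerBeta (l + a) ((m - l : ℕ) + b)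
      = eulerBeta a b := by
  induction m generalizing a b with
  | zero => simp
  | succ m ih =>
    rw [Finset.sum_choose_succ_mul (fun i j => eulerBeta (i + a) (j + b)),
      eulerBeta_eq_add ha hb, ← ih ha (add_pos hb one_pos), ← ih (add_pos ha one_pos) hb,
      add_comm]
    congr 1 <;> refine sum_congr rfl fun l hl => ?_
    · push_cast; ring_nf
    · rw [mem_range] at hl
      rw [Nat.succ_sub (by omega)]
      push_cast; ring_nf

end EulerBeta

noncomputable def betaBinomial (α β : ℝ) (m l : ℕ) : ℝ :=
  m.choose l * eulerBeta (l + α) (m - l + β) / eulerBeta α β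

section BetaBinomial

variable {α β : ℝ} {m l : ℕ}

lemma betaBinomial_pos (hα : 0 < α) (hβ : 0 < β) (hl : l ≤ m) : 0 < betaBinomial α β m l := by
  have hlm : (l : ℝ) ≤ m := by exact_mod_cast hl
  have hchoose := Nat.choose_pos hl
  have hnum :=
    eulerBeta_pos (add_pos_of_nonneg_of_pos l.cast_nonneg hα) (by linarith : 0 < m - l + β)
  have hden := eulerBeta_pos hα hβ
  unfold betaBinomial
  positivity

lemma sum_betaBinomial (hα : 0 < α) (hβ : 0 < β) :
    ∑ l ∈ range (m + 1), betaBinomial α β m l = 1 := by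
  unfold betaBinomial
  rw [← sum_div, div_eq_one_iff_eq (eulerBeta_pos hα hβ).ne', ← sum_choose_mul_eulerBeta m hα hβ]
  refine sum_congr rfl fun l hl => ?_
  rw [Nat.cast_sub (Nat.le_of_lt_succ (mem_range.1 hl))]

lemma betaBinomial_succ (hα : 0 < α) (hβ : 0 < β) (hl : l + 1 ≤ m) :
    betaBinomial α β m (l + 1)
      = betaBinomial α β m l * (m.choose (l + 1) / m.choose l) * ((l + α) / (m - l - 1 + β)) := by
  have hlm : (l : ℝ) + 1 ≤ m := by exact_mod_cast hl
  have hc : (m.choose l : ℝ) ≠ 0 := by exact_mod_cast (Nat.choose_pos (by omega)).ne'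
  have hshift := eulerBeta_add_one_left (add_pos_of_nonneg_of_pos l.cast_nonneg hα)
    (by linarith : 0 < m - l - 1 + β)
  unfold betaBinomial
  rw [show ((l + 1 : ℕ) : ℝ) + α = l + α + 1 by push_cast; ring,
    show (m : ℝ) - (l + 1 : ℕ) + β = m - l - 1 + β by push_cast; ring, hshift,
    show (m : ℝ) - l - 1 + β + 1 = m - l + β by ring]
  field_simp

lemma betaBinomial_mul_succ_le {α' β' : ℝ} (hα : 0 < α) (hβ' : 0 < β') (hαα' : α ≤ α')
    (hββ' : β' ≤ β) (hl : l + 1 ≤ m) :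
    betaBinomial α' β' m l * betaBinomial α β m (l + 1)
      ≤ betaBinomial α β m l * betaBinomial α' β' m (l + 1) := by
  have hlm : (l : ℝ) + 1 ≤ m := by exact_mod_cast hl
  have hα' := hα.trans_le hαα'
  have hβ := hβ'.trans_le hββ'
  rw [betaBinomial_succ hα hβ hl, betaBinomial_succ hα' hβ' hl]
  have hprod := mul_pos (betaBinomial_pos hα' hβ' (by omega : l ≤ m))
    (betaBinomial_pos hα hβ (by omega : l ≤ m))
  have hratio : ((l : ℝ) + α) / (m - l - 1 + β) ≤ (l + α') / (m - l - 1 + β') := by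
    gcongr
    linarith
  calc _ = betaBinomial α' β' m l * betaBinomial α β m l * (m.choose (l + 1) / m.choose l)
          * ((l + α) / (m - l - 1 + β)) := by ring
    _ ≤ betaBinomial α' β' m l * betaBinomial α β m l * (m.choose (l + 1) / m.choose l)
          * ((l + α') / (m - l - 1 + β')) := by gcongr
    _ = _ := by ring

end BetaBinomial

lemma bbPmf_eq_betaBinomial (y n : ℝ) (m s N : ℕ) :
    bbPmf y n m s N = betaBinomial (n * y + s) (n * (1 - y) + N - s) m := by
  ext l
  unfold bbPmf betaBinomial
  ring_nf

section LikelihoodRatio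

variable {p q : ℕ → ℝ} {m : ℕ}

lemma mul_le_mul_of_mul_succ_le (hq : ∀ j ≤ m, 0 < q j)
    (hadj : ∀ k, k + 1 ≤ m → p k * q (k + 1) ≤ q k * p (k + 1)) {j k : ℕ} (hjk : j ≤ k)
    (hk : k ≤ m) : p j * q k ≤ q j * p k := by
  have hmono : MonotoneOn (fun i => p i / q i) (Set.Iic m) := by
    refine monotoneOn_of_le_succ Set.ordConnected_Iic fun i _ hi hi' => ?_
    rw [Order.succ_eq_add_one] at hi' ⊢
    rw [div_le_div_iff₀ (hq i hi) (hq (i + 1) hi')]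
    linarith [hadj i hi']
  have := hmono (Set.mem_Iic.2 (hjk.trans hk)) (Set.mem_Iic.2 hk) hjk
  rw [div_le_div_iff₀ (hq j (hjk.trans hk)) (hq k hk)] at this
  linarith

lemma sum_range_le_sum_range_of_mul_le_mul
    (htot : ∑ j ∈ range (m + 1), p j = ∑ j ∈ range (m + 1), q j)
    (hpos : 0 < ∑ j ∈ range (m + 1), q j) {l : ℕ} (hl : l ≤ m)
    (hcross : ∀ j ≤ l, ∀ k, l < k → k ≤ m → p j * q k ≤ q j * p k) :
    ∑ j ∈ range (l + 1), p j ≤ ∑ j ∈ range (l + 1), q j := by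
  rw [← sum_range_add_sum_Ico p (by omega : l + 1 ≤ m + 1),
    ← sum_range_add_sum_Ico q (by omega : l + 1 ≤ m + 1)] at htot
  rw [← sum_range_add_sum_Ico q (by omega : l + 1 ≤ m + 1)] at hpos
  set A := ∑ j ∈ range (l + 1), p j
  set B := ∑ j ∈ range (l + 1), q j
  set A' := ∑ k ∈ Ico (l + 1) (m + 1), p k
  set B' := ∑ k ∈ Ico (l + 1) (m + 1), q k
  have hprod : A * B' ≤ B * A' := by
    simp only [A, B, A', B', sum_mul_sum]
    refine sum_le_sum fun j hj => sum_le_sum fun k hk => ?_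
    rw [mem_range] at hj
    rw [mem_Ico] at hk
    exact hcross j (by omega) k (by omega) (by omega)
  refine le_of_mul_le_mul_right ?_ hpos
  calc A * (B + B') = A * B + A * B' := by ring
    _ ≤ B * A + B * A' := by linarith [mul_comm A B]
    _ = B * (B + B') := by rw [← mul_add, htot]

lemma sum_range_le_sum_range_of_mul_succ_le (hq : ∀ j ≤ m, 0 < q j)
    (hadj : ∀ k, k + 1 ≤ m → p k * q (k + 1) ≤ q k * p (k + 1))
    (htot : ∑ j ∈ range (m + 1), p j = ∑ j ∈ range (m + 1), q j) {l : ℕ} (hl : l ≤ m) :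
    ∑ j ∈ range (l + 1), p j ≤ ∑ j ∈ range (l + 1), q j :=
  sum_range_le_sum_range_of_mul_le_mul htot
    (sum_pos (fun j hj => hq j (Nat.le_of_lt_succ (mem_range.1 hj))) nonempty_range_add_one) hl
    fun _ hj _ hlk hk => mul_le_mul_of_mul_succ_le hq hadj (hj.trans hlk.le) hk

end LikelihoodRatio

theorem bbPmf_stochDom_of_mean_le_general (n ylo yhi : ℝ) (m s N : ℕ)
    (hn : 0 < n) (h0 : 0 < ylo) (h1 : ylo < yhi) (h2 : yhi < 1)
    (hsN : s ≤ N) :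
    ∀ l ≤ m, ∑ j ∈ Finset.range (l + 1), bbPmf yhi n m s N j ≤
      ∑ j ∈ Finset.range (l + 1), bbPmf ylo n m s N j := by
  intro l hl
  have hs : (s : ℝ) ≤ N := by exact_mod_cast hsN
  have hαlo : 0 < n * ylo + s := by positivity
  have hβlo : 0 < n * (1 - ylo) + N - s := by nlinarith
  have hβhi : 0 < n * (1 - yhi) + N - s := by nlinarith
  have hαα : n * ylo + s ≤ n * yhi + s := by gcongr
  have hββ : n * (1 - yhi) + N - s ≤ n * (1 - ylo) + N - s := by gcongr
  have hαhi := hαlo.trans_le hαα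
  simp only [bbPmf_eq_betaBinomial]
  refine sum_range_le_sum_range_of_mul_succ_le (fun i hi => betaBinomial_pos hαlo hβlo hi)
    (fun i hi => betaBinomial_mul_succ_le hαlo hβhi hαα hββ hi) ?_ hl
  rw [sum_betaBinomial hαhi hβhi, sum_betaBinomial hαlo hβlo]

/-- Theorem 1: the Beta-Binomial distribution with larger prior mean parameter first-order
stochastically dominates the one with smaller prior mean parameter. -/
theorem bbPmf_stochDom_of_mean_le (n ylo yhi : ℝ) (m s N : ℕ)
    (hn : 0 < n) (h0 : 0 < ylo) (h1 : ylo < yhi) (h2 : yhi < 1)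
    (hm : 1 ≤ m) (hsN : s ≤ N) :
    ∀ l ≤ m, ∑ j ∈ Finset.range (l + 1), bbPmf yhi n m s N j ≤
      ∑ j ∈ Finset.range (l + 1), bbPmf ylo n m s N j :=
  bbPmf_stochDom_of_mean_le_general n ylo yhi m s N hn h0 h1 h2 hsN
end

section
/- Let y ∈ (0,1) and 0 < n̲ < n̄. If y > (s + m − 1)/(N + m − 1), then the Beta-Binomial distribution with prior strength n̄ first-order stochastically dominates the one with prior strength n̲ (for every l, Σ_{j=0}^{l} p(j | y, n̄, m, s, N) ≤ Σ_{j=0}^{l} p(j | y, n̲, m, s, N)); and if y < s/(N + m − 1), then the Beta-Binomial distribution with prior strength n̲ first-order stochastically dominates the one with prior strength n̄. -/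
open Finset Polynomial

theorem ascPochhammer_eval_add {R : Type*} [CommSemiring R] (a b : R) (k : ℕ) :
    (ascPochhammer R k).eval (a + b) = ∑ ij ∈ antidiagonal k,
      (k.choose ij.1 : R) * ((ascPochhammer R ij.1).eval a * (ascPochhammer R ij.2).eval b) := by
  induction k with
  | zero => simp
  | succ k ih =>
    rw [sum_antidiagonal_choose_succ_mul
      (fun i j => (ascPochhammer R i).eval a * (ascPochhammer R j).eval b),
      ascPochhammer_succ_eval, ih, sum_mul, ← sum_add_distrib]
    refine sum_congr rfl fun ij hij => ?_
    rw [HasAntidiagonal.mem_antidiagonal] at hij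
    rw [Nat.choose_symm_of_eq_add hij.symm, ascPochhammer_succ_eval, ascPochhammer_succ_eval,
      ← hij]
    push_cast
    ring

theorem Real.Gamma_add_nat_eq_mul_ascPochhammer {x : ℝ} (hx : ∀ k : ℕ, x ≠ -k) (k : ℕ) :
    Real.Gamma (x + k) = Real.Gamma x * (ascPochhammer ℝ k).eval x := by
  induction k with
  | zero => simp
  | succ k ih =>
    have hxk : x + k ≠ 0 := fun h => hx k (by linarith)
    rw [Nat.cast_succ, ← add_assoc, Real.Gamma_add_one hxk, ih, ascPochhammer_succ_eval]
    ring

theorem eulerBeta_add_nat_div_eulerBeta {a b : ℝ} (ha : 0 < a) (hb : 0 < b) (i j : ℕ) :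
    eulerBeta (a + i) (b + j) / eulerBeta a b =
      (ascPochhammer ℝ i).eval a * (ascPochhammer ℝ j).eval b /
        (ascPochhammer ℝ (i + j)).eval (a + b) := by
  have hab : 0 < a + b := add_pos ha hb
  have not_neg_nat {x : ℝ} (hx : 0 < x) (k : ℕ) : x ≠ -k :=
    ((neg_nonpos.2 k.cast_nonneg).trans_lt hx).ne'
  have hsum : a + i + (b + j) = a + b + ((i + j : ℕ) : ℝ) := by push_cast; ring
  have := (Real.Gamma_pos_of_pos ha).ne'
  have := (Real.Gamma_pos_of_pos hb).ne'
  have := (Real.Gamma_pos_of_pos hab).ne'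
  have := (ascPochhammer_pos (i + j) _ hab).ne'
  unfold eulerBeta
  rw [hsum, Real.Gamma_add_nat_eq_mul_ascPochhammer (not_neg_nat ha),
    Real.Gamma_add_nat_eq_mul_ascPochhammer (not_neg_nat hb),
    Real.Gamma_add_nat_eq_mul_ascPochhammer (not_neg_nat hab)]
  field_simp

theorem sum_range_le_of_monotoneOn_div {P Q : ℕ → ℝ} {m l : ℕ} (hl : l ≤ m)
    (hP : ∑ i ∈ range (m + 1), P i = 1) (hQ : ∑ i ∈ range (m + 1), Q i = 1)
    (hP_pos : ∀ i ≤ m, 0 < P i) (hmono : MonotoneOn (fun i => Q i / P i) (Set.Iic m)) :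
    ∑ i ∈ range (l + 1), Q i ≤ ∑ i ∈ range (l + 1), P i := by
  have split (f : ℕ → ℝ) : ∑ i ∈ range (l + 1), f i + ∑ i ∈ Ico (l + 1) (m + 1), f i =
      ∑ i ∈ range (m + 1), f i := sum_range_add_sum_Ico f (by omega)
  have cross : (∑ j ∈ range (l + 1), Q j) * ∑ k ∈ Ico (l + 1) (m + 1), P k ≤
      (∑ j ∈ range (l + 1), P j) * ∑ k ∈ Ico (l + 1) (m + 1), Q k := by
    simp_rw [sum_mul_sum]
    refine sum_le_sum fun j hj => sum_le_sum fun k hk => ?_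
    simp only [mem_range, mem_Ico] at hj hk
    have := hmono (Set.mem_Iic.2 (by omega)) (Set.mem_Iic.2 (by omega)) (by omega : j ≤ k)
    rw [div_le_div_iff₀ (hP_pos j (by omega)) (hP_pos k (by omega))] at this
    linarith
  have hP' := (split P).trans hP
  have hQ' := (split Q).trans hQ
  -- writing `A, B` (resp. `C, D`) for the two partial sums of `P` (resp. `Q`):
  -- `C = C (A + B) ≤ C A + A D = A (C + D) = A`
  linear_combination
    cross - (∑ j ∈ range (l + 1), Q j) * hP' + (∑ j ∈ range (l + 1), P j) * hQ'

noncomputable def betaBinomialPmf (a b : ℝ) (m l : ℕ) : ℝ :=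
  m.choose l * ((ascPochhammer ℝ l).eval a * (ascPochhammer ℝ (m - l)).eval b) /
    (ascPochhammer ℝ m).eval (a + b)

section BetaBinomial

variable {a b : ℝ} {m : ℕ}

theorem sum_betaBinomialPmf (h : (ascPochhammer ℝ m).eval (a + b) ≠ 0) :
    ∑ l ∈ range (m + 1), betaBinomialPmf a b m l = 1 := by
  unfold betaBinomialPmf
  rw [← sum_div, div_eq_one_iff_eq h, ascPochhammer_eval_add,
    Nat.sum_antidiagonal_eq_sum_range_succ
      (fun i j => (m.choose i : ℝ) * ((ascPochhammer ℝ i).eval a * (ascPochhammer ℝ j).eval b))]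

theorem betaBinomialPmf_pos (ha : 0 < a) (hb : 0 < b) {l : ℕ} (hl : l ≤ m) :
    0 < betaBinomialPmf a b m l := by
  have := Nat.choose_pos hl
  have := ascPochhammer_pos l a ha
  have := ascPochhammer_pos (m - l) b hb
  have := ascPochhammer_pos m (a + b) (add_pos ha hb)
  unfold betaBinomialPmf
  positivity

theorem betaBinomialPmf_succ_mul {l k : ℕ} (h : l + 1 + k = m) :
    betaBinomialPmf a b m (l + 1) * ((l + 1) * (b + k)) =
      betaBinomialPmf a b m l * ((k + 1) * (a + l)) := by
  obtain rfl := h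
  have hchoose :
      ((l + 1 + k).choose (l + 1) : ℝ) * (l + 1) = (l + 1 + k).choose l * (k + 1) := by
    have := Nat.choose_succ_right_eq (l + 1 + k) l
    rw [show l + 1 + k - l = k + 1 by omega] at this
    exact_mod_cast this
  unfold betaBinomialPmf
  rw [show l + 1 + k - (l + 1) = k by omega, show l + 1 + k - l = k + 1 by omega,
    ascPochhammer_succ_eval, ascPochhammer_succ_eval]
  linear_combination (ascPochhammer ℝ l).eval a * (a + l) * (ascPochhammer ℝ k).eval b *
    (b + k) / (ascPochhammer ℝ (l + 1 + k)).eval (a + b) * hchoose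

theorem betaBinomialPmf_div_monotoneOn {a₁ b₁ a₂ b₂ : ℝ} (ha₁ : 0 < a₁) (hb₁ : 0 < b₁)
    (ha₂ : 0 < a₂) (hb₂ : 0 < b₂)
    (hodds : ∀ l k : ℕ, l + 1 + k = m → (a₁ + l) * (b₂ + k) ≤ (a₂ + l) * (b₁ + k)) :
    MonotoneOn (fun l => betaBinomialPmf a₂ b₂ m l / betaBinomialPmf a₁ b₁ m l) (Set.Iic m) := by
  refine monotoneOn_of_le_add_one Set.ordConnected_Iic fun l _ _ hl => ?_
  obtain ⟨k, hk⟩ := Nat.exists_eq_add_of_le (Set.mem_Iic.1 hl)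
  have hw₁ := betaBinomialPmf_pos ha₁ hb₁ (m := m) (by omega : l ≤ m)
  have hw₂ := betaBinomialPmf_pos ha₂ hb₂ (m := m) (by omega : l ≤ m)
  have hstep₁ := betaBinomialPmf_succ_mul (a := a₁) (b := b₁) hk.symm
  have hstep₂ := betaBinomialPmf_succ_mul (a := a₂) (b := b₂) hk.symm
  have ratio : betaBinomialPmf a₂ b₂ m (l + 1) / betaBinomialPmf a₁ b₁ m (l + 1) =
      betaBinomialPmf a₂ b₂ m l / betaBinomialPmf a₁ b₁ m l *
        ((a₂ + l) * (b₁ + k) / ((a₁ + l) * (b₂ + k))) := by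
    rw [eq_div_of_mul_eq (by positivity) hstep₁, eq_div_of_mul_eq (by positivity) hstep₂]
    field_simp
  rw [ratio]
  exact le_mul_of_one_le_right (by positivity)
    ((one_le_div (by positivity)).2 (hodds l k hk.symm))

end BetaBinomial

theorem bbPmf_eq_betaBinomialPmf {y n : ℝ} {m s N l : ℕ} (hl : l ≤ m)
    (ha : 0 < n * y + s) (hb : 0 < n * (1 - y) + N - s) :
    bbPmf y n m s N l = betaBinomialPmf (n * y + s) (n * (1 - y) + N - s) m l := by
  have h₁ : (l : ℝ) + n * y + s = n * y + s + l := by ring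
  have h₂ : (m : ℝ) - l + n * (1 - y) + N - s = n * (1 - y) + N - s + ((m - l : ℕ) : ℝ) := by
    rw [Nat.cast_sub hl]; ring
  rw [bbPmf, betaBinomialPmf, mul_div_assoc, mul_div_assoc, h₁, h₂,
    eulerBeta_add_nat_div_eulerBeta ha hb, Nat.add_sub_cancel' hl]

theorem sum_range_bbPmf_le_sum_range_bbPmf {y n₁ n₂ : ℝ} {m s N l : ℕ}
    (hy0 : 0 < y) (hy1 : y < 1) (hn₁ : 0 < n₁) (hn₂ : 0 < n₂) (hsN : s ≤ N)
    (hodds : ∀ j k : ℕ, j + 1 + k = m → 0 ≤ (n₂ - n₁) * (y * (N + j + k) - s - j))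
    (hl : l ≤ m) :
    ∑ j ∈ range (l + 1), bbPmf y n₂ m s N j ≤ ∑ j ∈ range (l + 1), bbPmf y n₁ m s N j := by
  have hs : (s : ℝ) ≤ N := by exact_mod_cast hsN
  have params_pos {n : ℝ} (hn : 0 < n) : 0 < n * y + s ∧ 0 < n * (1 - y) + N - s :=
    ⟨by positivity, by nlinarith⟩
  obtain ⟨ha₁, hb₁⟩ := params_pos hn₁
  obtain ⟨ha₂, hb₂⟩ := params_pos hn₂
  have sum_eq {n : ℝ} (ha : 0 < n * y + s) (hb : 0 < n * (1 - y) + N - s) :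
      ∑ j ∈ range (l + 1), bbPmf y n m s N j =
        ∑ j ∈ range (l + 1), betaBinomialPmf (n * y + s) (n * (1 - y) + N - s) m j :=
    sum_congr rfl fun j hj => bbPmf_eq_betaBinomialPmf (by simp at hj; omega) ha hb
  rw [sum_eq ha₁ hb₁, sum_eq ha₂ hb₂]
  refine sum_range_le_of_monotoneOn_div hl
    (sum_betaBinomialPmf (ascPochhammer_pos _ _ (add_pos ha₁ hb₁)).ne')
    (sum_betaBinomialPmf (ascPochhammer_pos _ _ (add_pos ha₂ hb₂)).ne')
    (fun i hi => betaBinomialPmf_pos ha₁ hb₁ hi)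
    (betaBinomialPmf_div_monotoneOn ha₁ hb₁ ha₂ hb₂ fun j k hjk => ?_)
  linear_combination hodds j k hjk

theorem bbPmf_stochDom_strength_general (y nlo nhi : ℝ) (m s N : ℕ)
    (hy0 : 0 < y) (hy1 : y < 1) (hn0 : 0 < nlo) (hn : nlo < nhi)
    (hsN : s ≤ N) :
    (y > ((s : ℝ) + m - 1) / ((N : ℝ) + m - 1) →
      ∀ l ≤ m, ∑ j ∈ Finset.range (l + 1), bbPmf y nhi m s N j ≤
        ∑ j ∈ Finset.range (l + 1), bbPmf y nlo m s N j) ∧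
    (y < (s : ℝ) / ((N : ℝ) + m - 1) →
      ∀ l ≤ m, ∑ j ∈ Finset.range (l + 1), bbPmf y nlo m s N j ≤
        ∑ j ∈ Finset.range (l + 1), bbPmf y nhi m s N j) := by
  have hs : (s : ℝ) ≤ N := by exact_mod_cast hsN
  have hm {j k : ℕ} (hjk : j + 1 + k = m) : (m : ℝ) - 1 = j + k := by
    rw [← hjk]; push_cast; ring
  refine ⟨fun hy l hl => sum_range_bbPmf_le_sum_range_bbPmf hy0 hy1 hn0 (hn0.trans hn) hsN
    (fun j k hjk => ?_) hl, fun hy l hl => sum_range_bbPmf_le_sum_range_bbPmf hy0 hy1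
    (hn0.trans hn) hn0 hsN (fun j k hjk => ?_) hl⟩
  · rw [add_sub_assoc, add_sub_assoc, hm hjk] at hy
    have hsjk : (s : ℝ) + (j + k) ≤ y * (N + (j + k)) := by
      rcases (show (0 : ℝ) ≤ N + (j + k) by positivity).eq_or_lt with hD | hD
      · rw [← hD, mul_zero]; linarith
      · exact ((div_lt_iff₀ hD).1 hy).le
    exact mul_nonneg (sub_nonneg.2 hn.le) (by linarith [(k.cast_nonneg : (0 : ℝ) ≤ k)])
  · rw [add_sub_assoc, hm hjk] at hy
    have hys : y * (N + (j + k)) ≤ s := mul_le_of_le_div₀ s.cast_nonneg (by positivity) hy.le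
    exact mul_nonneg_of_nonpos_of_nonpos (sub_nonpos.2 hn.le)
      (by linarith [(j.cast_nonneg : (0 : ℝ) ≤ j)])

/-- Theorem 2: sufficient conditions on `y` under which the Beta-Binomial distribution with
larger (resp. smaller) prior strength first-order stochastically dominates the other one. -/
theorem bbPmf_stochDom_strength (y nlo nhi : ℝ) (m s N : ℕ)
    (hy0 : 0 < y) (hy1 : y < 1) (hn0 : 0 < nlo) (hn : nlo < nhi)
    (hm : 1 ≤ m) (hsN : s ≤ N) :
    (y > ((s : ℝ) + m - 1) / ((N : ℝ) + m - 1) →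
      ∀ l ≤ m, ∑ j ∈ Finset.range (l + 1), bbPmf y nhi m s N j ≤
        ∑ j ∈ Finset.range (l + 1), bbPmf y nlo m s N j) ∧
    (y < (s : ℝ) / ((N : ℝ) + m - 1) →
      ∀ l ≤ m, ∑ j ∈ Finset.range (l + 1), bbPmf y nlo m s N j ≤
        ∑ j ∈ Finset.range (l + 1), bbPmf y nhi m s N j) :=
  bbPmf_stochDom_strength_general y nlo nhi m s N hy0 hy1 hn0 hn hsN
end

section
/- Let ψ̲, ψ̄, η̲, η̄ be reals with 0 < ψ̲ < ψ̄ and 0 < η̲ < η̄, and let l ≥ 0 be an integer with l + 1 < η̲. Then (ψ̲ + l)(ψ̄ + l + 1)(η̲ − l − 1)(η̄ − l) < (ψ̲ + l + 1)(ψ̄ + l)(η̲ − l)(η̄ − l − 1). Consequently, the successive likelihood ratio L(l+1)/L(l) between two Beta-Binomial mass functions differing only in the strength parameter is strictly decreasing in l (L is half-monotone decreasing). -/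
private lemma aux (a b c d : ℝ) (ha : 0 < a) (hab : a < b) (hc : 0 < c) (hcd : c < d) :
    a * (b + 1) * c * (d + 1) < (a + 1) * b * (c + 1) * d := by
  nlinarith [mul_pos (mul_pos ha (ha.trans hab)) (sub_pos.mpr hcd),
    mul_pos (mul_pos hc (hc.trans hcd)) (sub_pos.mpr hab),
    mul_pos (ha.trans hab) (sub_pos.mpr hcd), mul_pos hc (sub_pos.mpr hab)]


/-- With `0 < ψ̲ < ψ̄`, `0 < η̲ < η̄` and `l + 1 < η̲`, one has
`(ψ̲ + l)(ψ̄ + l + 1)(η̲ − l − 1)(η̄ − l) < (ψ̲ + l + 1)(ψ̄ + l)(η̲ − l)(η̄ − l − 1)`: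
the successive likelihood ratio `L(l+1)/L(l)` between two Beta-Binomial mass functions differing
only in the strength parameter is strictly decreasing in `l` (half-monotone decreasing). -/
theorem bb_lr_half_monotone (ψlo ψhi ηlo ηhi : ℝ)
    (hψ0 : 0 < ψlo) (hψ : ψlo < ψhi) (hη0 : 0 < ηlo) (hη : ηlo < ηhi)
    (l : ℕ) (hl : (l : ℝ) + 1 < ηlo) :
    (ψlo + l) * (ψhi + l + 1) * (ηlo - l - 1) * (ηhi - l) <
      (ψlo + l + 1) * (ψhi + l) * (ηlo - l) * (ηhi - l - 1) := by
  have := aux (ψlo + l) (ψhi + l) (ηlo - l - 1) (ηhi - l - 1) (by positivity) (by linarith)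
    (by linarith) (by linarith)
  nlinarith [this]
end

section
/- Let 0 < n̲ ≤ n̄ and 0 < y̲ ≤ ȳ < 1 be reals, and let N ≥ 1 and 0 ≤ s ≤ N be integers. Then the minimum over (n⁰, y⁰) ∈ [n̲, n̄] × [y̲, ȳ] of the posterior mean (n⁰y⁰ + s)/(n⁰ + N) is attained at y⁰ = y̲, and equals (n̄y̲ + s)/(n̄ + N) if s/N ≥ y̲, and equals (n̲y̲ + s)/(n̲ + N) if s/N < y̲. -/
/-- The minimum over the rectangular prior parameter set `[n̲, n̄] × [y̲, ȳ]` of the posterior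
mean `(n⁰y⁰ + s)/(n⁰ + N)` is attained at `y⁰ = y̲`, and equals `(n̄y̲ + s)/(n̄ + N)` if
`s/N ≥ y̲`, and `(n̲y̲ + s)/(n̲ + N)` if `s/N < y̲`. -/
theorem posterior_mean_min (nlo nhi ylo yhi : ℝ)
    (hn0 : 0 < nlo) (hn : nlo ≤ nhi) (hy0 : 0 < ylo) (hy : ylo ≤ yhi) (hy1 : yhi < 1)
    (N s : ℕ) (hN : 1 ≤ N) (hsN : s ≤ N) :
    IsLeast {v : ℝ | ∃ n₀ ∈ Set.Icc nlo nhi, ∃ y₀ ∈ Set.Icc ylo yhi,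
        v = (n₀ * y₀ + s) / (n₀ + N)}
      (if ylo ≤ (s : ℝ) / N then (nhi * ylo + s) / (nhi + N)
        else (nlo * ylo + s) / (nlo + N)) := by
  have hN' : (0:ℝ) < N := by exact_mod_cast Nat.lt_of_lt_of_le Nat.zero_lt_one hN
  constructor
  · split_ifs with h
    · exact ⟨nhi, ⟨hn, le_refl _⟩, ylo, ⟨le_refl _, hy⟩, rfl⟩
    · exact ⟨nlo, ⟨le_refl _, hn⟩, ylo, ⟨le_refl _, hy⟩, rfl⟩
  · rintro v ⟨n₀, ⟨hn₀l, hn₀h⟩, y₀, ⟨hy₀l, hy₀h⟩, rfl⟩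
    have hd : (0:ℝ) < n₀ + N := by linarith
    have step : (n₀ * ylo + s) / (n₀ + N) ≤ (n₀ * y₀ + s) / (n₀ + N) := by
      apply div_le_div_of_nonneg_right ?_ hd.le
      nlinarith
    split_ifs with h
    · have hs : ylo * N ≤ s := by
        rw [le_div_iff₀ hN'] at h; linarith
      have : (nhi*ylo+s)/(nhi+N) ≤ (n₀*ylo+s)/(n₀+N) := by
        rw [div_le_div_iff₀ (by linarith) hd]
        nlinarith [sub_nonneg.mpr hn₀h]
      linarith
    · have hs : (s:ℝ) ≤ ylo * N := by
        push_neg at h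
        rw [div_lt_iff₀ hN'] at h; linarith
      have : (nlo*ylo+s)/(nlo+N) ≤ (n₀*ylo+s)/(n₀+N) := by
        rw [div_le_div_iff₀ (by linarith) hd]
        nlinarith [sub_nonneg.mpr hn₀l]
      linarith
end

section
/- Let 0 < n̲ ≤ n̄ and 0 < y̲ ≤ ȳ < 1 be reals, and let N ≥ 1 and 0 ≤ s ≤ N be integers. Then the maximum over (n⁰, y⁰) ∈ [n̲, n̄] × [y̲, ȳ] of the posterior mean (n⁰y⁰ + s)/(n⁰ + N) is attained at y⁰ = ȳ, and equals (n̄ȳ + s)/(n̄ + N) if s/N ≤ ȳ, and equals (n̲ȳ + s)/(n̲ + N) if s/N > ȳ. -/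
/-- The maximum over the rectangular prior parameter set `[n̲, n̄] × [y̲, ȳ]` of the posterior
mean `(n⁰y⁰ + s)/(n⁰ + N)` is attained at `y⁰ = ȳ`, and equals `(n̄ȳ + s)/(n̄ + N)` if
`s/N ≤ ȳ`, and `(n̲ȳ + s)/(n̲ + N)` if `s/N > ȳ`. -/
theorem posterior_mean_max (nlo nhi ylo yhi : ℝ)
    (hn0 : 0 < nlo) (hn : nlo ≤ nhi) (hy0 : 0 < ylo) (hy : ylo ≤ yhi) (hy1 : yhi < 1)
    (N s : ℕ) (hN : 1 ≤ N) (hsN : s ≤ N) :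
    IsGreatest {v : ℝ | ∃ n₀ ∈ Set.Icc nlo nhi, ∃ y₀ ∈ Set.Icc ylo yhi,
        v = (n₀ * y₀ + s) / (n₀ + N)}
      (if (s : ℝ) / N ≤ yhi then (nhi * yhi + s) / (nhi + N)
        else (nlo * yhi + s) / (nlo + N)) := by
  have hNpos : (0:ℝ) < N := by exact_mod_cast hN
  have hspos : (0:ℝ) ≤ s := Nat.cast_nonneg s
  split_ifs with h
  · have hs : (s:ℝ) ≤ yhi * N := by
      rw [div_le_iff₀ hNpos] at h; linarith
    constructor
    · exact ⟨nhi, ⟨hn, le_refl _⟩, yhi, ⟨hy, le_refl _⟩, rfl⟩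
    · rintro v ⟨n₀, ⟨hn1, hn2⟩, y₀, ⟨hy1', hy2⟩, rfl⟩
      have d1 : (0:ℝ) < n₀ + N := by linarith
      have d2 : (0:ℝ) < nhi + N := by linarith
      rw [div_le_div_iff₀ d1 d2]
      nlinarith [mul_nonneg (sub_nonneg.2 hn2) (sub_nonneg.2 hs),
        mul_nonneg (mul_nonneg (le_of_lt (lt_of_lt_of_le hn0 hn1)) (le_of_lt (lt_of_lt_of_le hn0 hn))) (sub_nonneg.2 hy2),
        mul_nonneg (mul_nonneg hNpos.le (le_of_lt (lt_of_lt_of_le hn0 hn1))) (sub_nonneg.2 hy2)]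
  · push_neg at h
    have hs : yhi * N ≤ (s:ℝ) := by
      rw [lt_div_iff₀ hNpos] at h; linarith
    constructor
    · exact ⟨nlo, ⟨le_refl _, hn⟩, yhi, ⟨hy, le_refl _⟩, rfl⟩
    · rintro v ⟨n₀, ⟨hn1, hn2⟩, y₀, ⟨hy1', hy2⟩, rfl⟩
      have d1 : (0:ℝ) < n₀ + N := by linarith
      have d2 : (0:ℝ) < nlo + N := by linarith
      rw [div_le_div_iff₀ d1 d2]
      nlinarith [mul_nonneg (sub_nonneg.2 hn1) (sub_nonneg.2 hs),
        mul_nonneg (mul_nonneg hn0.le (le_of_lt (lt_of_lt_of_le hn0 hn1))) (sub_nonneg.2 hy2),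
        mul_nonneg (mul_nonneg hNpos.le (le_of_lt (lt_of_lt_of_le hn0 hn1))) (sub_nonneg.2 hy2)]
end

section
/- Let K ≥ 1, let m_1, …, m_K ≥ 1 be integers, and let φ : {0,1}^{m_1} × ⋯ × {0,1}^{m_K} → {0,1} be monotone (nondecreasing in each binary coordinate). For l_k ∈ {0,…,m_k}, define the survival signature Φ(l_1,…,l_K) = [∏_{k=1}^K C(m_k, l_k)]^{-1} · Σ φ(x), where the sum ranges over all state vectors x whose type-k block has exactly l_k entries equal to 1, for each k. Then Φ is nondecreasing in each of its arguments l_1, …, l_K. -/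
/-!
Call a state `x` (with `true` meaning "working") *l-surviving* if its type-`k` block has `l k`
working components and `φ x = true`. Double count the pairs `(x, i)` with `x` `l`-surviving and
component `i` of type `k` failed: repairing `i` maps them injectively to pairs `(y, i)` with `y`
surviving for `l + e_k` (by monotonicity of `φ`) and `i` working. Hence
`(m_k - l_k) N(l) ≤ (l_k + 1) N(l + e_k)`, and `C(m, l + 1) (l + 1) = C(m, l) (m - l)` turns this
into `Φ(l) ≤ Φ(l + e_k)`. Unit steps inside the box `l ≤ m` reach every `l' ≥ l` in it.
-/

open Finset

section

variable {ι : Type*} [Fintype ι] [DecidableEq ι] {m : ι → ℕ} {β : Type*} [Preorder β]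

theorem monotoneOn_Iic_of_le_update_succ {f : (ι → ℕ) → β}
    (h : ∀ l i, l i < m i → f l ≤ f (Function.update l i (l i + 1))) :
    MonotoneOn f (Set.Iic m) := by
  -- clamping to the box makes `f` globally monotone, which is checked on covering pairs only
  have hmono : Monotone fun l => f (l ⊓ m) := by
    refine (monotone_iff_forall_covBy _).2 fun a b hab => ?_
    obtain ⟨i, x, hx, rfl⟩ := Pi.covBy_iff_exists_right_eq.1 hab
    rw [Nat.covBy_iff_add_one_eq] at hx
    subst hx
    by_cases hi : a i < m i
    · convert h (a ⊓ m) i (by simpa using hi) using 2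
      ext j
      rcases eq_or_ne j i with rfl | hj
      · simp [hi.le, Nat.succ_le_of_lt hi]
      · simp [hj]
    · apply le_of_eq
      congr 1
      ext j
      rcases eq_or_ne j i with rfl | hj
      · rw [Pi.inf_apply, Pi.inf_apply, Function.update_self]
        omega
      · simp [hj]
  intro l (hl : l ≤ m) l' (hl' : l' ≤ m) hll'
  simpa [inf_eq_left.2 hl, inf_eq_left.2 hl'] using hmono hll'

end

theorem Nat.cast_div_choose_le_cast_div_choose_succ {n l a b : ℕ} (hl : l < n)
    (h : (n - l) * a ≤ (l + 1) * b) :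
    (a : ℝ) / n.choose l ≤ b / n.choose (l + 1) := by
  rw [div_le_div_iff₀ (by exact_mod_cast Nat.choose_pos hl.le)
    (by exact_mod_cast Nat.choose_pos hl)]
  suffices a * n.choose (l + 1) ≤ b * n.choose l by exact_mod_cast this
  refine Nat.le_of_mul_le_mul_right ?_ l.succ_pos
  calc a * n.choose (l + 1) * (l + 1) = n.choose l * ((n - l) * a) := by
        rw [mul_assoc, Nat.choose_succ_right_eq]; ring
    _ ≤ n.choose l * ((l + 1) * b) := Nat.mul_le_mul_left _ h
    _ = b * n.choose l * (l + 1) := by ring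

theorem card_filter_eq_false {β : Type*} [Fintype β] [DecidableEq β] (x : β → Bool) :
    #{i | x i = false} = Fintype.card β - #{i | x i = true} := by
  rw [← card_compl]
  congr 1
  ext
  simp

section

variable {ι : Type*} [DecidableEq ι] {α : ι → Type*} [∀ k, DecidableEq (α k)]

def repair (x : ∀ k, α k → Bool) (k : ι) (i : α k) : ∀ k, α k → Bool :=
  Function.update x k (Function.update (x k) i true)

variable {x : ∀ k, α k → Bool} {k : ι} {i : α k}

theorem le_repair : x ≤ repair x k i := by
  intro k' j
  rcases eq_or_ne k' k with rfl | hk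
  · rcases eq_or_ne j i with rfl | hj
    · simp [repair]
    · simp [repair, hj]
  · simp [repair, hk]

theorem repair_apply_self : repair x k i k i = true := by simp [repair]

theorem repair_injOn : Set.InjOn (repair · k i) {x | x k i = false} := by
  intro x hx x' hx' h
  ext k' j
  have := congr_fun (congr_fun h k') j
  rcases eq_or_ne k' k with rfl | hk
  · rcases eq_or_ne j i with rfl | hj
    · exact hx.trans hx'.symm
    · simpa [repair, hj] using this
  · simpa [repair, hk] using this

variable [∀ k, Fintype (α k)]

def profile (x : ∀ k, α k → Bool) (k : ι) : ℕ := #{i | x k i = true}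

theorem profile_repair (hi : x k i = false) :
    profile (repair x k i) = Function.update (profile x) k (profile x k + 1) := by
  ext k'
  rcases eq_or_ne k' k with rfl | hk
  · rw [Function.update_self, profile, profile, ← card_insert_of_notMem (by simpa using hi)]
    congr 1
    ext j
    rcases eq_or_ne j i with rfl | hj
    · simp [repair]
    · simp [repair, hj]
  · simp [profile, repair, hk]

variable [Fintype ι]

def survivors (φ : (∀ k, α k → Bool) → Bool) (l : ι → ℕ) : Finset (∀ k, α k → Bool) :=
  {x | profile x = l ∧ φ x = true}

theorem card_sub_mul_card_survivors_le {φ : (∀ k, α k → Bool) → Bool} (hφ : Monotone φ)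
    (l : ι → ℕ) (k : ι) :
    (Fintype.card (α k) - l k) * #(survivors φ l) ≤
      (l k + 1) * #(survivors φ (Function.update l k (l k + 1))) := by
  set l' := Function.update l k (l k + 1)
  let offPairs := (survivors φ l).sigma fun x => ({i | x k i = false} : Finset (α k))
  let onPairs := (survivors φ l').sigma fun y => ({i | y k i = true} : Finset (α k))
  have hoff : #offPairs = #(survivors φ l) * (Fintype.card (α k) - l k) := by
    refine (card_sigma _ _).trans (sum_const_nat fun x hx => ?_)
    rw [card_filter_eq_false, ← (mem_filter.1 hx).2.1]
    rfl
  have hon : #onPairs = #(survivors φ l') * (l k + 1) := by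
    refine (card_sigma _ _).trans (sum_const_nat fun y hy => ?_)
    exact (congr_fun (mem_filter.1 hy).2.1 k).trans (Function.update_self ..)
  have hle : #offPairs ≤ #onPairs := by
    refine card_le_card_of_injOn (fun p => ⟨repair p.1 k p.2, p.2⟩) ?_ ?_
    · rintro ⟨x, i⟩ hp
      simp only [offPairs, coe_sigma, Set.mem_sigma_iff, mem_coe, survivors, mem_filter,
        mem_univ, true_and] at hp
      obtain ⟨⟨rfl, hφx⟩, hi⟩ := hp
      simp only [onPairs, l', coe_sigma, Set.mem_sigma_iff, mem_coe, survivors, mem_filter,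
        mem_univ, true_and, profile_repair hi, repair_apply_self, and_true]
      exact le_antisymm (Bool.le_true _) (hφx ▸ hφ le_repair)
    · rintro ⟨x, i⟩ hp ⟨x', i'⟩ hp' h
      simp only [offPairs, coe_sigma, Set.mem_sigma_iff, mem_coe, mem_filter, mem_univ,
        true_and] at hp hp'
      simp only [Sigma.mk.injEq, heq_eq_eq] at h
      obtain ⟨h, rfl⟩ := h
      rw [repair_injOn hp.2 hp'.2 h]
  simpa only [hoff, hon, mul_comm] using hle

noncomputable def survivalSignature (φ : (∀ k, α k → Bool) → Bool) (l : ι → ℕ) : ℝ :=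
  (∏ k, ((Fintype.card (α k)).choose (l k) : ℝ))⁻¹ * #(survivors φ l)

theorem survivalSignature_le_update_succ {φ : (∀ k, α k → Bool) → Bool} (hφ : Monotone φ)
    {l : ι → ℕ} {k : ι} (hl : l k < Fintype.card (α k)) :
    survivalSignature φ l ≤ survivalSignature φ (Function.update l k (l k + 1)) := by
  set C : ℕ → ℝ := fun n => ((Fintype.card (α k)).choose n : ℝ)
  set Q := ∏ j ∈ univ.erase k, ((Fintype.card (α j)).choose (l j) : ℝ)
  have hprod : ∏ j, ((Fintype.card (α j)).choose (l j) : ℝ) = C (l k) * Q :=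
    (mul_prod_erase _ _ (mem_univ k)).symm
  have hprod' : ∏ j, ((Fintype.card (α j)).choose (Function.update l k (l k + 1) j) : ℝ) =
      C (l k + 1) * Q := by
    rw [← mul_prod_erase _ _ (mem_univ k), Function.update_self]
    congr 1
    exact prod_congr rfl fun j hj => by rw [Function.update_of_ne (ne_of_mem_erase hj)]
  calc survivalSignature φ l = #(survivors φ l) / C (l k) * Q⁻¹ := by
        rw [survivalSignature, hprod]; ring
    _ ≤ #(survivors φ (Function.update l k (l k + 1))) / C (l k + 1) * Q⁻¹ := by
        refine mul_le_mul_of_nonneg_right ?_ (by positivity)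
        exact Nat.cast_div_choose_le_cast_div_choose_succ hl (card_sub_mul_card_survivors_le hφ l k)
    _ = survivalSignature φ (Function.update l k (l k + 1)) := by
        rw [survivalSignature, hprod']; ring

end

theorem survivalSignature_monotone_general (K : ℕ) (m : Fin K → ℕ)
    (φ : ((k : Fin K) → (Fin (m k) → Bool)) → Bool)
    (hφ : ∀ x y : (k : Fin K) → Fin (m k) → Bool, (∀ k i, x k i ≤ y k i) → φ x ≤ φ y) :
    ∀ l l' : (k : Fin K) → ℕ, (∀ k, l k ≤ l' k) → (∀ k, l' k ≤ m k) →
      (∏ k, ((m k).choose (l k) : ℝ))⁻¹ *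
          ∑ x : (k : Fin K) → Fin (m k) → Bool,
            (if (∀ k, (Finset.univ.filter (fun i => x k i = true)).card = l k) ∧ φ x = true
              then (1 : ℝ) else 0) ≤
        (∏ k, ((m k).choose (l' k) : ℝ))⁻¹ *
          ∑ x : (k : Fin K) → Fin (m k) → Bool,
            (if (∀ k, (Finset.univ.filter (fun i => x k i = true)).card = l' k) ∧ φ x = true
              then (1 : ℝ) else 0) := by
  intro l l' hll' hl'm
  have hmono : MonotoneOn (survivalSignature φ) (Set.Iic fun k => Fintype.card (Fin (m k))) :=
    monotoneOn_Iic_of_le_update_succ fun _ _ hl =>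
      survivalSignature_le_update_succ (fun x y hxy => hφ x y hxy) hl
  have := hmono (by simpa [Pi.le_def] using fun k => (hll' k).trans (hl'm k))
    (by simpa [Pi.le_def] using hl'm) hll'
  simpa [survivalSignature, survivors, profile, sum_boole, funext_iff] using this

/-- The survival signature
`Φ(l₁,…,l_K) = [∏ₖ C(mₖ, lₖ)]⁻¹ · Σ_{x : type-k block has exactly lₖ ones} φ(x)`
of a coherent system (i.e. with monotone structure function `φ`) is nondecreasing in each of
its arguments `l₁, …, l_K`. -/
theorem survivalSignature_monotone (K : ℕ) (hK : 1 ≤ K) (m : Fin K → ℕ) (hm : ∀ k, 1 ≤ m k)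
    (φ : ((k : Fin K) → (Fin (m k) → Bool)) → Bool)
    (hφ : ∀ x y : (k : Fin K) → Fin (m k) → Bool, (∀ k i, x k i ≤ y k i) → φ x ≤ φ y) :
    ∀ l l' : (k : Fin K) → ℕ, (∀ k, l k ≤ l' k) → (∀ k, l' k ≤ m k) →
      (∏ k, ((m k).choose (l k) : ℝ))⁻¹ *
          ∑ x : (k : Fin K) → Fin (m k) → Bool,
            (if (∀ k, (Finset.univ.filter (fun i => x k i = true)).card = l k) ∧ φ x = true
              then (1 : ℝ) else 0) ≤
        (∏ k, ((m k).choose (l' k) : ℝ))⁻¹ *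
          ∑ x : (k : Fin K) → Fin (m k) → Bool,
            (if (∀ k, (Finset.univ.filter (fun i => x k i = true)).card = l' k) ∧ φ x = true
              then (1 : ℝ) else 0) :=
  survivalSignature_monotone_general K m φ hφ
end
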